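/- For any anonymous voting method F, finite Y ⊆ 𝒳, and m ∈ ℤ⁺: (1) the majoritarian projection F_{maj,Y} is majoritarian; (2) the pairwise projection F_{pair,Y,m} is pairwise; (3) if F is neutral, then F_{maj,Y} and F_{pair,Y,m} are neutral. -/
import Mathlib


/- Formalization of the profile representation of (weighted) weak tournaments from
Holliday, Norman, Pacuit, Zahedian, "Impossibility theorems involving weakenings of
expansion consistency and resoluteness in voting". Candidates form an infinite
type `C`. -/

open Classical

noncomputable section

/-- `L` is a strict linear order on exactly the finite set `s`. -/
def IsStrictLinearOrderOn {C : Type} (s : Finset C) (L : C → C → Prop) : Prop :=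
  (∀ x, ¬ L x x) ∧ (∀ x y z, L x y → L y z → L x z) ∧
    (∀ x ∈ s, ∀ y ∈ s, x ≠ y → L x y ∨ L y x) ∧ ∀ x y, L x y → x ∈ s ∧ y ∈ s

/-- Restriction of a relation to a finite set `A`. -/
def restrictRel {C : Type} (A : Finset C) (L : C → C → Prop) : C → C → Prop :=
  fun x y => L x y ∧ x ∈ A ∧ y ∈ A

theorem IsStrictLinearOrderOn.restrict {C : Type} {s A : Finset C} {L : C → C → Prop}
    (h : IsStrictLinearOrderOn s L) (hA : A ⊆ s) :
    IsStrictLinearOrderOn A (restrictRel A L) := by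
  obtain ⟨hirr, htr, htot, hdom⟩ := h
  refine ⟨fun x hx => hirr x hx.1,
    fun x y z hxy hyz => ⟨htr _ _ _ hxy.1 hyz.1, hxy.2.1, hyz.2.2⟩, ?_,
    fun x y hxy => ⟨hxy.2.1, hxy.2.2⟩⟩
  intro x hx y hy hne
  rcases htot x (hA hx) y (hA hy) hne with h' | h'
  · exact Or.inl ⟨h', hx, hy⟩
  · exact Or.inr ⟨h', hy, hx⟩

/-- The image of a relation under the transposition of `a` and `b`:
`(x, y) ∈ swapRel a b L` iff `(π x, π y) ∈ L` where `π` swaps `a` and `b`. -/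
def swapRel {C : Type} (a b : C) (L : C → C → Prop) : C → C → Prop :=
  fun x y => L (Equiv.swap a b x) (Equiv.swap a b y)

theorem IsStrictLinearOrderOn.swapRel_mem {C : Type} {s : Finset C} {L : C → C → Prop}
    (a b : C) (h : IsStrictLinearOrderOn s L) :
    IsStrictLinearOrderOn (s.image (Equiv.swap a b)) (swapRel a b L) := by
  obtain ⟨hirr, htr, htot, hdom⟩ := h
  refine ⟨fun x => hirr _, fun x y z hxy hyz => htr _ _ _ hxy hyz, ?_, ?_⟩
  · intro x hx y hy hne
    obtain ⟨x', hx', rfl⟩ := Finset.mem_image.mp hx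
    obtain ⟨y', hy', rfl⟩ := Finset.mem_image.mp hy
    have hne' : x' ≠ y' := by rintro rfl; exact hne rfl
    have := htot x' hx' y' hy' hne'
    simpa [swapRel, Equiv.swap_apply_self] using this
  · intro x y hxy
    obtain ⟨h1, h2⟩ := hdom _ _ hxy
    exact ⟨Finset.mem_image.mpr ⟨_, h1, Equiv.swap_apply_self a b x⟩,
      Finset.mem_image.mpr ⟨_, h2, Equiv.swap_apply_self a b y⟩⟩

theorem IsStrictLinearOrderOn.of_swapRel {C : Type} {s : Finset C} {L : C → C → Prop}
    {a b : C} (h : IsStrictLinearOrderOn s (swapRel a b L)) :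
    IsStrictLinearOrderOn (s.image (Equiv.swap a b)) L := by
  have h2 := h.swapRel_mem a b
  have heq : swapRel a b (swapRel a b L) = L := by
    funext x y
    simp [swapRel, Equiv.swap_apply_self]
  rwa [heq] at h2

/-- A generalized anonymous profile: an integer-valued function on the strict linear
orders of a finite nonempty set of candidates (encoded as a function on all
relations, supported on the strict linear orders of `cands`). -/
structure GAProfile (C : Type) where
  cands : Finset C
  cands_nonempty : cands.Nonempty
  count : (C → C → Prop) → ℤ
  count_supp : ∀ L, count L ≠ 0 → IsStrictLinearOrderOn cands L

namespace GAProfile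

variable {C : Type}

/-- `P` is an anonymous profile: all ballot counts are nonnegative. -/
def IsAnon (P : GAProfile C) : Prop := ∀ L, 0 ≤ P.count L

/-- The margin `μ_{x,y}(P)` of `x` over `y` in `P`. -/
def margin (P : GAProfile C) (x y : C) : ℤ :=
  (∑ᶠ L : C → C → Prop, if L x y then P.count L else 0) -
    ∑ᶠ L : C → C → Prop, if L y x then P.count L else 0

theorem margin_neg (P : GAProfile C) (x y : C) : P.margin y x = - P.margin x y := by
  simp only [margin]
  ring

/-- The restriction `P|_Z` of a generalized anonymous profile to a nonempty subset
`Z` of its candidates. -/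
def restrict (P : GAProfile C) (Z : Finset C) (hZ : Z.Nonempty) (hsub : Z ⊆ P.cands) :
    GAProfile C where
  cands := Z
  cands_nonempty := hZ
  count := fun L => ∑ᶠ L' : C → C → Prop, if restrictRel Z L' = L then P.count L' else 0
  count_supp := by
    intro L hL
    by_contra hnot
    apply hL
    apply finsum_eq_zero_of_forall_eq_zero
    intro L'
    split_ifs with h
    · by_contra hc
      exact hnot (h ▸ ((P.count_supp L' hc).restrict hsub))
    · rfl

/-- The profile `P_{a⇄b}` obtained by transposing the candidates `a` and `b`. -/
def swapCands (P : GAProfile C) (a b : C) : GAProfile C where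
  cands := P.cands.image (Equiv.swap a b)
  cands_nonempty := P.cands_nonempty.image _
  count := fun L => P.count (swapRel a b L)
  count_supp := fun L h => (P.count_supp _ h).of_swapRel

end GAProfile

/-- A weak tournament: an asymmetric directed graph on a finite nonempty set of
vertices. -/
structure WeakTournament (C : Type) where
  verts : Finset C
  verts_nonempty : verts.Nonempty
  edge : C → C → Prop
  edge_asymm : ∀ x y, edge x y → ¬ edge y x
  edge_dom : ∀ x y, edge x y → x ∈ verts ∧ y ∈ verts

/-- A weighted weak tournament: a weak tournament together with a positive integer
weight on each edge (normalized to weight `0` off the edges). -/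
structure WeightedWeakTournament (C : Type) where
  verts : Finset C
  verts_nonempty : verts.Nonempty
  edge : C → C → Prop
  edge_asymm : ∀ x y, edge x y → ¬ edge y x
  edge_dom : ∀ x y, edge x y → x ∈ verts ∧ y ∈ verts
  wt : C → C → ℤ
  wt_pos : ∀ x y, edge x y → 0 < wt x y
  wt_eq_zero : ∀ x y, ¬ edge x y → wt x y = 0

namespace GAProfile

variable {C : Type}

/-- The majority graph `M(P)` of a generalized anonymous profile. -/
def maj (P : GAProfile C) : WeakTournament C where
  verts := P.cands
  verts_nonempty := P.cands_nonempty
  edge := fun x y => 0 < P.margin x y ∧ x ∈ P.cands ∧ y ∈ P.cands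
  edge_asymm := by
    intro x y h h'
    have hneg := P.margin_neg x y
    have h1 := h.1
    have h2 := h'.1
    omega
  edge_dom := fun x y h => ⟨h.2.1, h.2.2⟩

/-- The margin graph `ℳ(P)` of a generalized anonymous profile. -/
def marg (P : GAProfile C) : WeightedWeakTournament C where
  verts := P.cands
  verts_nonempty := P.cands_nonempty
  edge := fun x y => 0 < P.margin x y ∧ x ∈ P.cands ∧ y ∈ P.cands
  edge_asymm := by
    intro x y h h'
    have hneg := P.margin_neg x y
    have h1 := h.1
    have h2 := h'.1
    omega
  edge_dom := fun x y h => ⟨h.2.1, h.2.2⟩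
  wt := fun x y =>
    if 0 < P.margin x y ∧ x ∈ P.cands ∧ y ∈ P.cands then P.margin x y else 0
  wt_pos := by
    intro x y h
    show 0 < if 0 < P.margin x y ∧ x ∈ P.cands ∧ y ∈ P.cands then P.margin x y else 0
    rw [if_pos h]
    exact h.1
  wt_eq_zero := by
    intro x y h
    show (if 0 < P.margin x y ∧ x ∈ P.cands ∧ y ∈ P.cands then P.margin x y else 0) = 0
    exact if_neg h

end GAProfile

/-- The number `ψ_Y = 2 (|Y| − 2)!`. -/
def psi {C : Type} (Y : Finset C) : ℤ := 2 * ((Y.card - 2).factorial : ℤ)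

theorem psi_pos {C : Type} (Y : Finset C) : 0 < psi Y := by
  have h := Nat.factorial_pos (Y.card - 2)
  simp only [psi]
  omega

/-- The count function of the profile `𝐋_Y` consisting of one copy of each linear
order of `Y`. -/
def allOrdersCount {C : Type} (Y : Finset C) (L : C → C → Prop) : ℤ :=
  if IsStrictLinearOrderOn Y L then 1 else 0

/-- `L` ranks `a` first and `b` second among the candidates in `Y`. -/
def firstSecond {C : Type} (Y : Finset C) (a b : C) (L : C → C → Prop) : Prop :=
  (∀ z ∈ Y, z ≠ a → L a z) ∧ ∀ z ∈ Y, z ≠ a → z ≠ b → L b z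

/-- The count function of the `ab`-`Y`-block `𝐋_{ab-Y}`: one copy of each linear
order of `Y` with `a` first and `b` second. -/
def blockCount {C : Type} (Y : Finset C) (a b : C) (L : C → C → Prop) : ℤ :=
  if IsStrictLinearOrderOn Y L ∧ firstSecond Y a b L then 1 else 0

/-- The count function of the profile
`𝔏_Y(T) = 𝐋_Y + Σ_{a→b in T} (𝐋_{ab-Y} − 𝐋_{ba-Y})`. -/
def bigLCount {C : Type} (Y : Finset C) (T : WeakTournament C) : (C → C → Prop) → ℤ :=
  fun L => allOrdersCount Y L +
    ∑ p ∈ T.verts ×ˢ T.verts,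
      (if T.edge p.1 p.2 then blockCount Y p.1 p.2 L - blockCount Y p.2 p.1 L else 0)

/-- The profile `𝔏_Y(T)`. -/
def bigL {C : Type} (Y : Finset C) (T : WeakTournament C) (hsub : T.verts ⊆ Y) :
    GAProfile C where
  cands := Y
  cands_nonempty := by
    obtain ⟨x, hx⟩ := T.verts_nonempty
    exact ⟨x, hsub hx⟩
  count := bigLCount Y T
  count_supp := by
    intro L hL
    by_contra h
    apply hL
    have hb : ∀ a b : C, blockCount Y a b L = 0 := by
      intro a b
      exact if_neg (by exact fun hc => h hc.1)
    simp only [bigLCount, allOrdersCount, if_neg h, zero_add]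
    refine Finset.sum_eq_zero fun p _ => ?_
    rw [hb, hb, sub_self]
    split <;> rfl

/-- The profile representation `𝔓_Y(T) = 𝔏_Y(T)|_{X(T)}` of a weak tournament `T`
relative to `Y`. -/
def profileRep {C : Type} (Y : Finset C) (T : WeakTournament C) (hsub : T.verts ⊆ Y) :
    GAProfile C :=
  (bigL Y T hsub).restrict T.verts T.verts_nonempty hsub

/-- The count function of the profile
`𝔏_{Y,m}(𝒯) = m𝐋_Y + Σ_{a→b in 𝒯 with weight kψ_Y} (k𝐋_{ab-Y} − k𝐋_{ba-Y})`. -/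
def bigLWCount {C : Type} (Y : Finset C) (m : ℕ) (T : WeightedWeakTournament C) :
    (C → C → Prop) → ℤ :=
  fun L => (m : ℤ) * allOrdersCount Y L +
    ∑ p ∈ T.verts ×ˢ T.verts,
      (if T.edge p.1 p.2 then
        (T.wt p.1 p.2 / psi Y) * (blockCount Y p.1 p.2 L - blockCount Y p.2 p.1 L)
      else 0)

/-- The profile `𝔏_{Y,m}(𝒯)`. -/
def bigLW {C : Type} (Y : Finset C) (m : ℕ) (T : WeightedWeakTournament C)
    (hsub : T.verts ⊆ Y) : GAProfile C where
  cands := Y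
  cands_nonempty := by
    obtain ⟨x, hx⟩ := T.verts_nonempty
    exact ⟨x, hsub hx⟩
  count := bigLWCount Y m T
  count_supp := by
    intro L hL
    by_contra h
    apply hL
    have hb : ∀ a b : C, blockCount Y a b L = 0 := by
      intro a b
      exact if_neg (by exact fun hc => h hc.1)
    simp only [bigLWCount, allOrdersCount, if_neg h, mul_zero, zero_add]
    refine Finset.sum_eq_zero fun p _ => ?_
    rw [hb, hb, sub_self, mul_zero]
    split <;> rfl

/-- The profile representation `𝔓_{Y,m}(𝒯) = 𝔏_{Y,m}(𝒯)|_{X(𝒯)}` of a weighted weak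
tournament `𝒯` relative to `Y` and `m`. -/
def profileRepW {C : Type} (Y : Finset C) (m : ℕ) (T : WeightedWeakTournament C)
    (hsub : T.verts ⊆ Y) : GAProfile C :=
  (bigLW Y m T hsub).restrict T.verts T.verts_nonempty hsub

/-- Membership in `𝕎𝕋^w_{Y,m}`: a weighted weak tournament on vertices included in
`Y`, each of whose weights is `kψ_Y` for some positive `k ≤ m`. -/
def MemWTw {C : Type} (Y : Finset C) (m : ℕ) (T : WeightedWeakTournament C) : Prop :=
  T.verts ⊆ Y ∧
    ∀ a b, T.edge a b → ∃ k : ℕ, 0 < k ∧ k ≤ m ∧ T.wt a b = (k : ℤ) * psi Y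

/-- The weighted weak tournament obtained by multiplying all weights by `n > 0`. -/
def WeightedWeakTournament.scale {C : Type} (n : ℤ) (hn : 0 < n)
    (T : WeightedWeakTournament C) : WeightedWeakTournament C where
  verts := T.verts
  verts_nonempty := T.verts_nonempty
  edge := T.edge
  edge_asymm := T.edge_asymm
  edge_dom := T.edge_dom
  wt := fun x y => n * T.wt x y
  wt_pos := fun x y h => mul_pos hn (T.wt_pos x y h)
  wt_eq_zero := fun x y h => by
    show n * T.wt x y = 0
    rw [T.wt_eq_zero x y h, mul_zero]

/-- An anonymous voting method: a function on a set of anonymous profiles assigning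
to each profile in its domain a nonempty set of winners among its candidates. -/
structure AnonVotingMethod (C : Type) where
  dom : Set (GAProfile C)
  dom_anon : ∀ P ∈ dom, P.IsAnon
  winners : GAProfile C → Finset C
  winners_nonempty : ∀ P ∈ dom, (winners P).Nonempty
  winners_sub : ∀ P ∈ dom, winners P ⊆ P.cands

namespace AnonVotingMethod

variable {C : Type}

/-- Majoritarianism: the winners depend only on the majority graph. -/
def Majoritarian (F : AnonVotingMethod C) : Prop :=
  ∀ P ∈ F.dom, ∀ P' ∈ F.dom, P.maj = P'.maj → F.winners P = F.winners P'

/-- Pairwiseness: the winners depend only on the margin graph. -/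
def Pairwise (F : AnonVotingMethod C) : Prop :=
  ∀ P ∈ F.dom, ∀ P' ∈ F.dom, P.marg = P'.marg → F.winners P = F.winners P'

/-- Neutrality: transposing two candidates transposes the winners accordingly. -/
def Neutral (F : AnonVotingMethod C) : Prop :=
  ∀ P ∈ F.dom, ∀ a b : C, P.swapCands a b ∈ F.dom →
    F.winners (P.swapCands a b) = (F.winners P).image (Equiv.swap a b)

end AnonVotingMethod

/-- The majoritarian projection `F_{maj,Y}` of an anonymous voting method `F`:
its domain consists of the anonymous profiles `P` with `X(P) ⊆ Y` and
`𝔓_Y(M(P)) ∈ dom(F)`, and `F_{maj,Y}(P) = F(𝔓_Y(M(P)))`. -/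
def majProj {C : Type} (F : AnonVotingMethod C) (Y : Finset C) : AnonVotingMethod C where
  dom := {P | P.IsAnon ∧ ∃ h : P.maj.verts ⊆ Y, profileRep Y P.maj h ∈ F.dom}
  dom_anon := fun _ hP => hP.1
  winners := fun P =>
    if h : P.maj.verts ⊆ Y then F.winners (profileRep Y P.maj h) else P.cands
  winners_nonempty := by
    rintro P ⟨hA, h, hd⟩
    show (if h : P.maj.verts ⊆ Y then
      F.winners (profileRep Y P.maj h) else P.cands).Nonempty
    rw [dif_pos h]
    exact F.winners_nonempty _ hd
  winners_sub := by
    rintro P ⟨hA, h, hd⟩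
    show (if h : P.maj.verts ⊆ Y then
      F.winners (profileRep Y P.maj h) else P.cands) ⊆ P.cands
    rw [dif_pos h]
    exact F.winners_sub _ hd

/-- The pairwise projection `F_{pair,Y,m}` of an anonymous voting method `F`:
its domain consists of the anonymous profiles `P` with `X(P) ⊆ Y`, all weights in
`ℳ(P)` at most `m`, and `𝔓_{Y,m}(ψℳ(P)) ∈ dom(F)`, and
`F_{pair,Y,m}(P) = F(𝔓_{Y,m}(ψℳ(P)))`. -/
def pairProj {C : Type} (F : AnonVotingMethod C) (Y : Finset C) (m : ℕ) :
    AnonVotingMethod C where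
  dom := {P | P.IsAnon ∧ (∀ x ∈ P.cands, ∀ y ∈ P.cands, P.margin x y ≤ (m : ℤ)) ∧
    ∃ h : (WeightedWeakTournament.scale (psi Y) (psi_pos Y) P.marg).verts ⊆ Y,
      profileRepW Y m (WeightedWeakTournament.scale (psi Y) (psi_pos Y) P.marg) h ∈ F.dom}
  dom_anon := fun _ hP => hP.1
  winners := fun P =>
    if h : (WeightedWeakTournament.scale (psi Y) (psi_pos Y) P.marg).verts ⊆ Y then
      F.winners
        (profileRepW Y m (WeightedWeakTournament.scale (psi Y) (psi_pos Y) P.marg) h)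
    else P.cands
  winners_nonempty := by
    rintro P ⟨hA, hw, h, hd⟩
    show (if h : (WeightedWeakTournament.scale (psi Y) (psi_pos Y) P.marg).verts ⊆ Y then
      F.winners
        (profileRepW Y m (WeightedWeakTournament.scale (psi Y) (psi_pos Y) P.marg) h)
      else P.cands).Nonempty
    rw [dif_pos h]
    exact F.winners_nonempty _ hd
  winners_sub := by
    rintro P ⟨hA, hw, h, hd⟩
    show (if h : (WeightedWeakTournament.scale (psi Y) (psi_pos Y) P.marg).verts ⊆ Y then
      F.winners
        (profileRepW Y m (WeightedWeakTournament.scale (psi Y) (psi_pos Y) P.marg) h)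
      else P.cands) ⊆ P.cands
    rw [dif_pos h]
    exact F.winners_sub _ hd


section NeutralAux
variable {C : Type}

theorem swapRel_swapRel (a b : C) (L : C → C → Prop) : swapRel a b (swapRel a b L) = L := by
  funext x y; simp [swapRel, Equiv.swap_apply_self]

theorem swapRel_inj (a b : C) : Function.Injective (swapRel a b) := by
  intro L M h
  have := congrArg (swapRel a b) h
  rwa [swapRel_swapRel, swapRel_swapRel] at this

/-- The involution `swapRel a b` as an equivalence of relation types. -/
def swapRelEquiv (a b : C) : (C → C → Prop) ≃ (C → C → Prop) where
  toFun := swapRel a b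
  invFun := swapRel a b
  left_inv := swapRel_swapRel a b
  right_inv := swapRel_swapRel a b

theorem mem_image_swap {Z : Finset C} {a b x : C} :
    Equiv.swap a b x ∈ Z.image (Equiv.swap a b) ↔ x ∈ Z := by
  constructor
  · intro h
    obtain ⟨y, hy, h2⟩ := Finset.mem_image.mp h
    rwa [← (Equiv.swap a b).injective h2]
  · exact fun h => Finset.mem_image_of_mem _ h

theorem mem_image_swap' {Z : Finset C} {a b x : C} :
    x ∈ Z.image (Equiv.swap a b) ↔ Equiv.swap a b x ∈ Z := by
  conv_lhs => rw [show x = Equiv.swap a b (Equiv.swap a b x) by simp]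
  exact mem_image_swap

theorem restrictRel_swap (Z : Finset C) (a b : C) (L : C → C → Prop) :
    restrictRel Z (swapRel a b L) = swapRel a b (restrictRel (Z.image (Equiv.swap a b)) L) := by
  funext x y
  show (L (Equiv.swap a b x) (Equiv.swap a b y) ∧ x ∈ Z ∧ y ∈ Z) =
    (L (Equiv.swap a b x) (Equiv.swap a b y) ∧ Equiv.swap a b x ∈ Z.image (Equiv.swap a b) ∧
      Equiv.swap a b y ∈ Z.image (Equiv.swap a b))
  apply propext
  constructor
  · rintro ⟨h, hx, hy⟩; exact ⟨h, mem_image_swap.mpr hx, mem_image_swap.mpr hy⟩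
  · rintro ⟨h, hx, hy⟩; exact ⟨h, mem_image_swap.mp hx, mem_image_swap.mp hy⟩

theorem image_swap_self {Y : Finset C} {a b : C} (ha : a ∈ Y) (hb : b ∈ Y) :
    Y.image (Equiv.swap a b) = Y := by
  apply Finset.Subset.antisymm
  · intro x hx
    obtain ⟨y, hy, rfl⟩ := Finset.mem_image.mp hx
    rcases eq_or_ne y a with rfl | hya
    · simpa [Equiv.swap_apply_left] using hb
    rcases eq_or_ne y b with rfl | hyb
    · simpa [Equiv.swap_apply_right] using ha
    · rwa [Equiv.swap_apply_of_ne_of_ne hya hyb]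
  · intro x hx
    refine Finset.mem_image.mpr ⟨Equiv.swap a b x, ?_, by simp⟩
    rcases eq_or_ne x a with rfl | hxa
    · simpa [Equiv.swap_apply_left] using hb
    rcases eq_or_ne x b with rfl | hxb
    · simpa [Equiv.swap_apply_right] using ha
    · rwa [Equiv.swap_apply_of_ne_of_ne hxa hxb]

theorem swapRel_restrict_of_not_mem {Z : Finset C} {a b : C} (ha : a ∉ Z) (hb : b ∉ Z)
    (M : C → C → Prop) : swapRel a b (restrictRel Z M) = restrictRel Z M := by
  have key : ∀ x : C, Equiv.swap a b x ∈ Z → Equiv.swap a b x = x := by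
    intro x hx
    rcases eq_or_ne x a with rfl | hxa
    · simp only [Equiv.swap_apply_left] at hx; exact absurd hx hb
    rcases eq_or_ne x b with rfl | hxb
    · simp only [Equiv.swap_apply_right] at hx; exact absurd hx ha
    · exact Equiv.swap_apply_of_ne_of_ne hxa hxb
  have key2 : ∀ x : C, x ∈ Z → Equiv.swap a b x = x := by
    intro x hx
    exact Equiv.swap_apply_of_ne_of_ne (fun h => ha (h ▸ hx)) (fun h => hb (h ▸ hx))
  funext x y
  show (restrictRel Z M (Equiv.swap a b x) (Equiv.swap a b y)) = restrictRel Z M x y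
  apply propext
  constructor
  · rintro ⟨h, hx, hy⟩
    have ex := key x hx
    have ey := key y hy
    rw [ex] at h hx
    rw [ey] at h hy
    exact ⟨h, hx, hy⟩
  · rintro ⟨h, hx, hy⟩
    rw [key2 x hx, key2 y hy]
    exact ⟨h, hx, hy⟩

theorem gaext {P Q : GAProfile C} (h1 : P.cands = Q.cands) (h2 : P.count = Q.count) :
    P = Q := by
  cases P; cases Q
  dsimp at h1 h2
  subst h1; subst h2
  rfl

theorem wt_ext {T T' : WeakTournament C} (h1 : T.verts = T'.verts) (h2 : T.edge = T'.edge) :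
    T = T' := by
  cases T; cases T'
  dsimp at h1 h2
  subst h1; subst h2
  rfl

theorem wwt_ext {T T' : WeightedWeakTournament C} (h1 : T.verts = T'.verts)
    (h2 : T.edge = T'.edge) (h3 : T.wt = T'.wt) : T = T' := by
  cases T; cases T'
  dsimp at h1 h2 h3
  subst h1; subst h2; subst h3
  rfl

theorem profileRep_congr {Y : Finset C} {T T' : WeakTournament C} (h : T = T')
    (hs : T.verts ⊆ Y) (hs' : T'.verts ⊆ Y) :
    profileRep Y T hs = profileRep Y T' hs' := by subst h; rfl

theorem profileRepW_congr {Y : Finset C} {m : ℕ} {T T' : WeightedWeakTournament C}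
    (h : T = T') (hs : T.verts ⊆ Y) (hs' : T'.verts ⊆ Y) :
    profileRepW Y m T hs = profileRepW Y m T' hs' := by subst h; rfl

theorem margin_swapCands (P : GAProfile C) (a b x y : C) :
    (P.swapCands a b).margin x y = P.margin (Equiv.swap a b x) (Equiv.swap a b y) := by
  have key : ∀ u v : C,
      (∑ᶠ L : C → C → Prop, if L u v then (P.swapCands a b).count L else 0)
        = ∑ᶠ L : C → C → Prop,
            if L (Equiv.swap a b u) (Equiv.swap a b v) then P.count L else 0 := by
    intro u v
    have hre := finsum_comp_equiv (swapRelEquiv a b)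
      (f := fun L : C → C → Prop =>
        if L (Equiv.swap a b u) (Equiv.swap a b v) then P.count L else 0)
    rw [← hre]
    apply finsum_congr
    intro L
    have h2 : (swapRel a b L) (Equiv.swap a b u) (Equiv.swap a b v) ↔ L u v := by
      simp [swapRel, Equiv.swap_apply_self]
    show (if L u v then P.count (swapRel a b L) else 0)
      = if (swapRel a b L) (Equiv.swap a b u) (Equiv.swap a b v) then P.count (swapRel a b L)
        else 0
    by_cases h : L u v
    · rw [if_pos h, if_pos (h2.mpr h)]
    · rw [if_neg h, if_neg (fun hc => h (h2.mp hc))]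
  show (_ : ℤ) - _ = _ - _
  rw [key x y, key y x]

theorem islo_swap_iff {Y : Finset C} {a b : C} (hY : Y.image (Equiv.swap a b) = Y)
    (L : C → C → Prop) :
    IsStrictLinearOrderOn Y (swapRel a b L) ↔ IsStrictLinearOrderOn Y L := by
  constructor
  · intro h; have := h.of_swapRel; rwa [hY] at this
  · intro h; have := h.swapRel_mem a b; rwa [hY] at this

theorem allOrdersCount_swap {Y : Finset C} {a b : C} (hY : Y.image (Equiv.swap a b) = Y)
    (L : C → C → Prop) : allOrdersCount Y (swapRel a b L) = allOrdersCount Y L :=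
  if_congr (islo_swap_iff hY L) rfl rfl

theorem firstSecond_swap {Y : Finset C} {a b : C} (hY : Y.image (Equiv.swap a b) = Y)
    (c d : C) (L : C → C → Prop) :
    firstSecond Y c d (swapRel a b L) ↔
      firstSecond Y (Equiv.swap a b c) (Equiv.swap a b d) L := by
  have hmem : ∀ z : C, z ∈ Y → Equiv.swap a b z ∈ Y := by
    intro z hz
    rw [← hY]
    exact Finset.mem_image_of_mem _ hz
  constructor
  · rintro ⟨h1, h2⟩
    constructor
    · intro z hz hzc
      have hw : Equiv.swap a b z ∈ Y := hmem z hz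
      have hwc : Equiv.swap a b z ≠ c := fun h => hzc (by rw [← h, Equiv.swap_apply_self])
      have := h1 _ hw hwc
      simpa [swapRel, Equiv.swap_apply_self] using this
    · intro z hz hzc hzd
      have hw : Equiv.swap a b z ∈ Y := hmem z hz
      have hwc : Equiv.swap a b z ≠ c := fun h => hzc (by rw [← h, Equiv.swap_apply_self])
      have hwd : Equiv.swap a b z ≠ d := fun h => hzd (by rw [← h, Equiv.swap_apply_self])
      have := h2 _ hw hwc hwd
      simpa [swapRel, Equiv.swap_apply_self] using this
  · rintro ⟨h1, h2⟩
    constructor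
    · intro z hz hzc
      exact h1 _ (hmem z hz) (fun h => hzc ((Equiv.swap a b).injective h))
    · intro z hz hzc hzd
      exact h2 _ (hmem z hz) (fun h => hzc ((Equiv.swap a b).injective h))
        (fun h => hzd ((Equiv.swap a b).injective h))

theorem blockCount_swap {Y : Finset C} {a b : C} (hY : Y.image (Equiv.swap a b) = Y)
    (c d : C) (L : C → C → Prop) :
    blockCount Y c d (swapRel a b L) =
      blockCount Y (Equiv.swap a b c) (Equiv.swap a b d) L :=
  if_congr (and_congr (islo_swap_iff hY L) (firstSecond_swap hY c d L)) rfl rfl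

theorem maj_edge_swap (P : GAProfile C) (a b c d : C) :
    (P.swapCands a b).maj.edge (Equiv.swap a b c) (Equiv.swap a b d) ↔ P.maj.edge c d := by
  show (0 < (P.swapCands a b).margin (Equiv.swap a b c) (Equiv.swap a b d) ∧
      Equiv.swap a b c ∈ P.cands.image (Equiv.swap a b) ∧
      Equiv.swap a b d ∈ P.cands.image (Equiv.swap a b)) ↔
    (0 < P.margin c d ∧ c ∈ P.cands ∧ d ∈ P.cands)
  rw [margin_swapCands, Equiv.swap_apply_self, Equiv.swap_apply_self]
  rw [mem_image_swap, mem_image_swap]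

theorem marg_edge_swap (P : GAProfile C) (a b c d : C) :
    (P.swapCands a b).marg.edge (Equiv.swap a b c) (Equiv.swap a b d) ↔ P.marg.edge c d :=
  maj_edge_swap P a b c d

theorem marg_wt_swap (P : GAProfile C) (a b c d : C) :
    (P.swapCands a b).marg.wt (Equiv.swap a b c) (Equiv.swap a b d) = P.marg.wt c d := by
  show (if 0 < (P.swapCands a b).margin (Equiv.swap a b c) (Equiv.swap a b d) ∧
      Equiv.swap a b c ∈ P.cands.image (Equiv.swap a b) ∧
      Equiv.swap a b d ∈ P.cands.image (Equiv.swap a b)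
    then (P.swapCands a b).margin (Equiv.swap a b c) (Equiv.swap a b d) else 0) =
    if 0 < P.margin c d ∧ c ∈ P.cands ∧ d ∈ P.cands then P.margin c d else 0
  rw [margin_swapCands, Equiv.swap_apply_self, Equiv.swap_apply_self]
  exact if_congr (and_congr Iff.rfl (and_congr mem_image_swap mem_image_swap)) rfl rfl

theorem image_swap_fix {Z : Finset C} {a b : C} (ha : a ∉ Z) (hb : b ∉ Z) :
    Z.image (Equiv.swap a b) = Z := by
  apply Finset.Subset.antisymm
  · intro x hx
    obtain ⟨y, hy, rfl⟩ := Finset.mem_image.mp hx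
    rwa [Equiv.swap_apply_of_ne_of_ne (ne_of_mem_of_not_mem hy ha) (ne_of_mem_of_not_mem hy hb)]
  · intro x hx
    exact Finset.mem_image.mpr ⟨x, hx,
      Equiv.swap_apply_of_ne_of_ne (ne_of_mem_of_not_mem hx ha) (ne_of_mem_of_not_mem hx hb)⟩

theorem swapCands_maj_eq (P : GAProfile C) {a b : C} (ha : a ∉ P.cands) (hb : b ∉ P.cands) :
    (P.swapCands a b).maj = P.maj := by
  have himg : P.cands.image (Equiv.swap a b) = P.cands := image_swap_fix ha hb
  have hfix : ∀ z ∈ P.cands, Equiv.swap a b z = z := fun z hz =>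
    Equiv.swap_apply_of_ne_of_ne (fun h => ha (h ▸ hz)) (fun h => hb (h ▸ hz))
  apply wt_ext
  · exact himg
  · funext x y
    show (0 < (P.swapCands a b).margin x y ∧ x ∈ P.cands.image (Equiv.swap a b) ∧
      y ∈ P.cands.image (Equiv.swap a b)) =
      (0 < P.margin x y ∧ x ∈ P.cands ∧ y ∈ P.cands)
    rw [himg]
    apply propext
    constructor
    · rintro ⟨hm, hx, hy⟩
      rw [margin_swapCands, hfix x hx, hfix y hy] at hm
      exact ⟨hm, hx, hy⟩
    · rintro ⟨hm, hx, hy⟩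
      rw [margin_swapCands, hfix x hx, hfix y hy]
      exact ⟨hm, hx, hy⟩

theorem swapCands_marg_eq (P : GAProfile C) {a b : C} (ha : a ∉ P.cands) (hb : b ∉ P.cands) :
    (P.swapCands a b).marg = P.marg := by
  have himg : P.cands.image (Equiv.swap a b) = P.cands := image_swap_fix ha hb
  have hfix : ∀ z ∈ P.cands, Equiv.swap a b z = z := fun z hz =>
    Equiv.swap_apply_of_ne_of_ne (fun h => ha (h ▸ hz)) (fun h => hb (h ▸ hz))
  have hedge : ∀ x y : C,
      (0 < (P.swapCands a b).margin x y ∧ x ∈ P.cands ∧ y ∈ P.cands) ↔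
      (0 < P.margin x y ∧ x ∈ P.cands ∧ y ∈ P.cands) := by
    intro x y
    constructor
    · rintro ⟨hm, hx, hy⟩
      rw [margin_swapCands, hfix x hx, hfix y hy] at hm
      exact ⟨hm, hx, hy⟩
    · rintro ⟨hm, hx, hy⟩
      rw [margin_swapCands, hfix x hx, hfix y hy]
      exact ⟨hm, hx, hy⟩
  apply wwt_ext
  · exact himg
  · funext x y
    show (0 < (P.swapCands a b).margin x y ∧ x ∈ P.cands.image (Equiv.swap a b) ∧
      y ∈ P.cands.image (Equiv.swap a b)) =
      (0 < P.margin x y ∧ x ∈ P.cands ∧ y ∈ P.cands)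
    rw [himg]
    exact propext (hedge x y)
  · funext x y
    show (if 0 < (P.swapCands a b).margin x y ∧ x ∈ P.cands.image (Equiv.swap a b) ∧
        y ∈ P.cands.image (Equiv.swap a b) then (P.swapCands a b).margin x y else 0) =
      if 0 < P.margin x y ∧ x ∈ P.cands ∧ y ∈ P.cands then P.margin x y else 0
    rw [himg]
    by_cases hc : x ∈ P.cands ∧ y ∈ P.cands
    · have hmeq : (P.swapCands a b).margin x y = P.margin x y := by
        rw [margin_swapCands, hfix x hc.1, hfix y hc.2]
      rw [hmeq]
    · rw [if_neg (fun h => hc ⟨h.2.1, h.2.2⟩), if_neg (fun h => hc ⟨h.2.1, h.2.2⟩)]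

theorem profileRep_swap {Y : Finset C} (P : GAProfile C) (a b : C)
    (h1 : P.maj.verts ⊆ Y) (h1' : (P.swapCands a b).maj.verts ⊆ Y) :
    profileRep Y (P.swapCands a b).maj h1' = (profileRep Y P.maj h1).swapCands a b := by
  have hZY : P.cands ⊆ Y := h1
  have hZY' : P.cands.image (Equiv.swap a b) ⊆ Y := h1'
  apply gaext
  · rfl
  · funext L
    show (∑ᶠ L' : C → C → Prop,
        if restrictRel (P.cands.image (Equiv.swap a b)) L' = L
        then bigLCount Y (P.swapCands a b).maj L' else 0)
      = ∑ᶠ L' : C → C → Prop,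
          if restrictRel P.cands L' = swapRel a b L then bigLCount Y P.maj L' else 0
    by_cases hab : a ∈ Y ∧ b ∈ Y
    · obtain ⟨ha, hb⟩ := hab
      have hY : Y.image (Equiv.swap a b) = Y := image_swap_self ha hb
      rw [← finsum_comp_equiv (swapRelEquiv a b)
        (f := fun L' : C → C → Prop =>
          if restrictRel P.cands L' = swapRel a b L then bigLCount Y P.maj L' else 0)]
      apply finsum_congr
      intro L'
      have hcond : (restrictRel P.cands ((swapRelEquiv a b) L') = swapRel a b L) ↔
          (restrictRel (P.cands.image (Equiv.swap a b)) L' = L) := by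
        show (restrictRel P.cands (swapRel a b L') = swapRel a b L) ↔ _
        rw [restrictRel_swap]
        exact ⟨fun h => swapRel_inj a b h, fun h => by rw [h]⟩
      have hval : bigLCount Y P.maj ((swapRelEquiv a b) L')
          = bigLCount Y (P.swapCands a b).maj L' := by
        show bigLCount Y P.maj (swapRel a b L') = _
        unfold bigLCount
        rw [allOrdersCount_swap hY]
        congr 1
        refine Finset.sum_nbij'
          (fun p => (Equiv.swap a b p.1, Equiv.swap a b p.2))
          (fun p => (Equiv.swap a b p.1, Equiv.swap a b p.2)) ?_ ?_ ?_ ?_ ?_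
        · intro p hp
          rw [Finset.mem_product] at hp ⊢
          exact ⟨Finset.mem_image_of_mem _ hp.1, Finset.mem_image_of_mem _ hp.2⟩
        · intro p hp
          rw [Finset.mem_product] at hp ⊢
          exact ⟨mem_image_swap'.mp hp.1, mem_image_swap'.mp hp.2⟩
        · intro p _; simp
        · intro p _; simp
        · intro p hp
          show (if P.maj.edge p.1 p.2
              then blockCount Y p.1 p.2 (swapRel a b L')
                - blockCount Y p.2 p.1 (swapRel a b L') else 0)
            = if (P.swapCands a b).maj.edge (Equiv.swap a b p.1) (Equiv.swap a b p.2)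
              then blockCount Y (Equiv.swap a b p.1) (Equiv.swap a b p.2) L'
                - blockCount Y (Equiv.swap a b p.2) (Equiv.swap a b p.1) L' else 0
          rw [blockCount_swap hY, blockCount_swap hY]
          exact if_congr (maj_edge_swap P a b p.1 p.2).symm rfl rfl
      by_cases h : restrictRel (P.cands.image (Equiv.swap a b)) L' = L
      · rw [if_pos h, if_pos (hcond.mpr h), hval]
      · rw [if_neg h, if_neg (fun hc => h (hcond.mp hc))]
    · have hnab : a ∉ P.cands ∧ b ∉ P.cands := by
        rcases not_and_or.mp hab with hay | hby
        · refine ⟨fun h => hay (hZY h), fun h => hay (hZY' ?_)⟩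
          exact Finset.mem_image.mpr ⟨b, h, Equiv.swap_apply_right a b⟩
        · refine ⟨fun h => hby (hZY' ?_), fun h => hby (hZY h)⟩
          exact Finset.mem_image.mpr ⟨a, h, Equiv.swap_apply_left a b⟩
      obtain ⟨ha, hb⟩ := hnab
      have himg : P.cands.image (Equiv.swap a b) = P.cands := image_swap_fix ha hb
      have hmaj : (P.swapCands a b).maj = P.maj := swapCands_maj_eq P ha hb
      rw [hmaj, himg]
      apply finsum_congr
      intro L'
      have hc : (restrictRel P.cands L' = swapRel a b L) ↔ (restrictRel P.cands L' = L) := by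
        constructor
        · intro h
          have h2 := congrArg (swapRel a b) h
          rw [swapRel_swapRel, swapRel_restrict_of_not_mem ha hb] at h2
          exact h2
        · intro h
          have h2 := congrArg (swapRel a b) h
          rw [swapRel_restrict_of_not_mem ha hb] at h2
          exact h2
      exact if_congr hc.symm rfl rfl

theorem profileRepW_swap {Y : Finset C} (m : ℕ) (P : GAProfile C) (a b : C)
    (h1 : (WeightedWeakTournament.scale (psi Y) (psi_pos Y) P.marg).verts ⊆ Y)
    (h1' : (WeightedWeakTournament.scale (psi Y) (psi_pos Y)
      (P.swapCands a b).marg).verts ⊆ Y) :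
    profileRepW Y m (WeightedWeakTournament.scale (psi Y) (psi_pos Y)
        (P.swapCands a b).marg) h1'
      = (profileRepW Y m (WeightedWeakTournament.scale (psi Y) (psi_pos Y) P.marg)
          h1).swapCands a b := by
  have hZY : P.cands ⊆ Y := h1
  have hZY' : P.cands.image (Equiv.swap a b) ⊆ Y := h1'
  apply gaext
  · rfl
  · funext L
    show (∑ᶠ L' : C → C → Prop,
        if restrictRel (P.cands.image (Equiv.swap a b)) L' = L
        then bigLWCount Y m (WeightedWeakTournament.scale (psi Y) (psi_pos Y)
          (P.swapCands a b).marg) L' else 0)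
      = ∑ᶠ L' : C → C → Prop,
          if restrictRel P.cands L' = swapRel a b L
          then bigLWCount Y m (WeightedWeakTournament.scale (psi Y) (psi_pos Y) P.marg) L'
          else 0
    by_cases hab : a ∈ Y ∧ b ∈ Y
    · obtain ⟨ha, hb⟩ := hab
      have hY : Y.image (Equiv.swap a b) = Y := image_swap_self ha hb
      rw [← finsum_comp_equiv (swapRelEquiv a b)
        (f := fun L' : C → C → Prop =>
          if restrictRel P.cands L' = swapRel a b L
          then bigLWCount Y m (WeightedWeakTournament.scale (psi Y) (psi_pos Y) P.marg) L'
          else 0)]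
      apply finsum_congr
      intro L'
      have hcond : (restrictRel P.cands ((swapRelEquiv a b) L') = swapRel a b L) ↔
          (restrictRel (P.cands.image (Equiv.swap a b)) L' = L) := by
        show (restrictRel P.cands (swapRel a b L') = swapRel a b L) ↔ _
        rw [restrictRel_swap]
        exact ⟨fun h => swapRel_inj a b h, fun h => by rw [h]⟩
      have hval : bigLWCount Y m (WeightedWeakTournament.scale (psi Y) (psi_pos Y) P.marg)
            ((swapRelEquiv a b) L')
          = bigLWCount Y m (WeightedWeakTournament.scale (psi Y) (psi_pos Y)
              (P.swapCands a b).marg) L' := by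
        show bigLWCount Y m _ (swapRel a b L') = _
        unfold bigLWCount
        rw [allOrdersCount_swap hY]
        congr 1
        refine Finset.sum_nbij'
          (fun p => (Equiv.swap a b p.1, Equiv.swap a b p.2))
          (fun p => (Equiv.swap a b p.1, Equiv.swap a b p.2)) ?_ ?_ ?_ ?_ ?_
        · intro p hp
          rw [Finset.mem_product] at hp ⊢
          exact ⟨Finset.mem_image_of_mem _ hp.1, Finset.mem_image_of_mem _ hp.2⟩
        · intro p hp
          rw [Finset.mem_product] at hp ⊢
          exact ⟨mem_image_swap'.mp hp.1, mem_image_swap'.mp hp.2⟩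
        · intro p _; simp
        · intro p _; simp
        · intro p hp
          show (if P.marg.edge p.1 p.2
              then (psi Y * P.marg.wt p.1 p.2 / psi Y) *
                (blockCount Y p.1 p.2 (swapRel a b L')
                  - blockCount Y p.2 p.1 (swapRel a b L')) else 0)
            = if (P.swapCands a b).marg.edge (Equiv.swap a b p.1) (Equiv.swap a b p.2)
              then (psi Y * (P.swapCands a b).marg.wt (Equiv.swap a b p.1)
                  (Equiv.swap a b p.2) / psi Y) *
                (blockCount Y (Equiv.swap a b p.1) (Equiv.swap a b p.2) L'
                  - blockCount Y (Equiv.swap a b p.2) (Equiv.swap a b p.1) L') else 0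
          rw [blockCount_swap hY, blockCount_swap hY, marg_wt_swap]
          exact if_congr (marg_edge_swap P a b p.1 p.2).symm rfl rfl
      by_cases h : restrictRel (P.cands.image (Equiv.swap a b)) L' = L
      · rw [if_pos h, if_pos (hcond.mpr h), hval]
      · rw [if_neg h, if_neg (fun hc => h (hcond.mp hc))]
    · have hnab : a ∉ P.cands ∧ b ∉ P.cands := by
        rcases not_and_or.mp hab with hay | hby
        · refine ⟨fun h => hay (hZY h), fun h => hay (hZY' ?_)⟩
          exact Finset.mem_image.mpr ⟨b, h, Equiv.swap_apply_right a b⟩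
        · refine ⟨fun h => hby (hZY' ?_), fun h => hby (hZY h)⟩
          exact Finset.mem_image.mpr ⟨a, h, Equiv.swap_apply_left a b⟩
      obtain ⟨ha, hb⟩ := hnab
      have himg : P.cands.image (Equiv.swap a b) = P.cands := image_swap_fix ha hb
      have hmarg : (P.swapCands a b).marg = P.marg := swapCands_marg_eq P ha hb
      rw [hmarg, himg]
      apply finsum_congr
      intro L'
      have hc : (restrictRel P.cands L' = swapRel a b L) ↔ (restrictRel P.cands L' = L) := by
        constructor
        · intro h
          have h2 := congrArg (swapRel a b) h
          rw [swapRel_swapRel, swapRel_restrict_of_not_mem ha hb] at h2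
          exact h2
        · intro h
          have h2 := congrArg (swapRel a b) h
          rw [swapRel_restrict_of_not_mem ha hb] at h2
          exact h2
      exact if_congr hc.symm rfl rfl

end NeutralAux

/-- For any anonymous voting method `F`, finite `Y ⊆ 𝒳`, and
`m ∈ ℤ⁺`: (1) the majoritarian projection `F_{maj,Y}` is majoritarian; (2) the
pairwise projection `F_{pair,Y,m}` is pairwise; (3) if `F` is neutral, then
`F_{maj,Y}` and `F_{pair,Y,m}` are neutral. -/
theorem projections_properties (C : Type) [Infinite C] (F : AnonVotingMethod C)
    (Y : Finset C) (m : ℕ) (hm : 0 < m) :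
    (majProj F Y).Majoritarian ∧ (pairProj F Y m).Pairwise ∧
      (F.Neutral → (majProj F Y).Neutral ∧ (pairProj F Y m).Neutral) := by
  refine ⟨?_, ?_, ?_⟩
  · rintro P hP P' hP' heq
    obtain ⟨hA, h1, hd⟩ := hP
    obtain ⟨hA', h1', hd'⟩ := hP'
    show (if h : P.maj.verts ⊆ Y then F.winners (profileRep Y P.maj h) else P.cands)
      = (if h : P'.maj.verts ⊆ Y then F.winners (profileRep Y P'.maj h) else P'.cands)
    rw [dif_pos h1, dif_pos h1', profileRep_congr heq h1 h1']
  · rintro P hP P' hP' heq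
    obtain ⟨hA, hw, h1, hd⟩ := hP
    obtain ⟨hA', hw', h1', hd'⟩ := hP'
    have heqs : WeightedWeakTournament.scale (psi Y) (psi_pos Y) P.marg
        = WeightedWeakTournament.scale (psi Y) (psi_pos Y) P'.marg := by rw [heq]
    show (if h : (WeightedWeakTournament.scale (psi Y) (psi_pos Y) P.marg).verts ⊆ Y then
        F.winners (profileRepW Y m (WeightedWeakTournament.scale (psi Y) (psi_pos Y) P.marg) h)
      else P.cands)
      = (if h : (WeightedWeakTournament.scale (psi Y) (psi_pos Y) P'.marg).verts ⊆ Y then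
        F.winners (profileRepW Y m (WeightedWeakTournament.scale (psi Y) (psi_pos Y) P'.marg) h)
      else P'.cands)
    rw [dif_pos h1, dif_pos h1', profileRepW_congr heqs h1 h1']
  · intro hN
    constructor
    · rintro P hP a b hPs
      obtain ⟨hA, h1, hd⟩ := hP
      obtain ⟨hA', h1', hd'⟩ := hPs
      show (if h : (P.swapCands a b).maj.verts ⊆ Y then
          F.winners (profileRep Y (P.swapCands a b).maj h) else (P.swapCands a b).cands)
        = ((if h : P.maj.verts ⊆ Y then
            F.winners (profileRep Y P.maj h) else P.cands)).image (Equiv.swap a b)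
      rw [dif_pos h1', dif_pos h1]
      have hrep := profileRep_swap P a b h1 h1'
      rw [hrep]
      exact hN _ hd a b (hrep ▸ hd')
    · rintro P hP a b hPs
      obtain ⟨hA, hw, h1, hd⟩ := hP
      obtain ⟨hA', hw', h1', hd'⟩ := hPs
      show (if h : (WeightedWeakTournament.scale (psi Y) (psi_pos Y)
            (P.swapCands a b).marg).verts ⊆ Y then
          F.winners (profileRepW Y m (WeightedWeakTournament.scale (psi Y) (psi_pos Y)
            (P.swapCands a b).marg) h)
        else (P.swapCands a b).cands)
        = ((if h : (WeightedWeakTournament.scale (psi Y) (psi_pos Y) P.marg).verts ⊆ Y then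
            F.winners (profileRepW Y m
              (WeightedWeakTournament.scale (psi Y) (psi_pos Y) P.marg) h)
          else P.cands)).image (Equiv.swap a b)
      rw [dif_pos h1', dif_pos h1]
      have hrep := profileRepW_swap m P a b h1 h1'
      rw [hrep]
      exact hN _ hd a b (hrep ▸ hd')
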